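/- arXiv:1102.2374 — 3 statements merged into one kernel-verified Lean document; each statement's English description precedes it below -/
import Mathlib

section
/- Let μ > 0 and let v be a nontrivial C² real solution on (0,∞) of v'' + v'/a + μv + v³ = 0 that extends continuously to a = 0 with a·v'(a) → 0 as a → 0⁺. Then v and v' are bounded on [1,∞); in fact √a·v(a) and (√a·v(a))' are bounded as a → ∞, so v(a) = O(a^{-1/2}). -/
/-!
The substitution `w = √a · v` removes the first-order term: `w'' + (1/(4a²) + μ) w + w³/a = 0`.
For this equation the energy `E = ½ w'² + w²/(8a²) + (μ/2) w² + w⁴/(4a)` satisfies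
`E' = -w²/(4a³) - w⁴/(4a²) ≤ 0`, and every term of `E` is nonnegative, so `E(1)` bounds
`(μ/2) w²` and `½ w'²` on `[1, ∞)`. Bounds on `v = w/√a` and `v' = (w' - v/(2√a))/√a` follow.
-/

open Real Set

theorem hasDerivAt_and_hasDerivAt_deriv_of_contDiffOn_two {𝕜 F : Type*} [NontriviallyNormedField 𝕜]
    [NormedAddCommGroup F] [NormedSpace 𝕜 F] {f : 𝕜 → F} {s : Set 𝕜} {x : 𝕜}
    (hf : ContDiffOn 𝕜 2 f s) (hs : IsOpen s) (hx : x ∈ s) :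
    HasDerivAt f (deriv f x) x ∧ HasDerivAt (deriv f) (deriv (deriv f) x) x := by
  have hf' : ContDiffOn 𝕜 1 (deriv f) s := hf.deriv_of_isOpen hs (by norm_num)
  exact ⟨((hf.contDiffAt (hs.mem_nhds hx)).differentiableAt two_ne_zero).hasDerivAt,
    ((hf'.contDiffAt (hs.mem_nhds hx)).differentiableAt one_ne_zero).hasDerivAt⟩

section RadialEnergy

variable {μ : ℝ} {w w' w'' : ℝ → ℝ}

noncomputable def radialEnergy (μ : ℝ) (w w' : ℝ → ℝ) (a : ℝ) : ℝ :=
  w' a ^ 2 / 2 + w a ^ 2 / (8 * a ^ 2) + μ / 2 * w a ^ 2 + w a ^ 4 / (4 * a)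

theorem hasDerivAt_radialEnergy {a w''a : ℝ} (ha : a ≠ 0) (hw : HasDerivAt w (w' a) a)
    (hw' : HasDerivAt w' w''a a) (hode : w''a + (1 / (4 * a ^ 2) + μ) * w a + w a ^ 3 / a = 0) :
    HasDerivAt (radialEnergy μ w w') (-(w a ^ 2 / (4 * a ^ 3) + w a ^ 4 / (4 * a ^ 2))) a := by
  have h8 : HasDerivAt (fun b : ℝ => 8 * b ^ 2) (8 * (2 * a)) a := by
    simpa using (hasDerivAt_pow 2 a).const_mul 8
  have h4 : HasDerivAt (fun b : ℝ => 4 * b) 4 a := by simpa using (hasDerivAt_id a).const_mul 4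
  have hE := ((((hw'.pow 2).div_const 2).add ((hw.pow 2).div h8 (by positivity))).add
    ((hw.pow 2).const_mul (μ / 2))).add ((hw.pow 4).div h4 (by simpa using ha))
  have hw''a : w''a = -((1 / (4 * a ^ 2) + μ) * w a + w a ^ 3 / a) := by linear_combination hode
  refine hE.congr_deriv ?_
  simp only [Pi.pow_apply, hw''a]
  field_simp
  ring

theorem antitoneOn_radialEnergy (hw : ∀ a > 0, HasDerivAt w (w' a) a)
    (hw' : ∀ a > 0, HasDerivAt w' (w'' a) a)
    (hode : ∀ a > 0, w'' a + (1 / (4 * a ^ 2) + μ) * w a + w a ^ 3 / a = 0) :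
    AntitoneOn (radialEnergy μ w w') (Ioi 0) := by
  have hE : ∀ a ∈ Ioi (0 : ℝ), HasDerivAt (radialEnergy μ w w')
      (-(w a ^ 2 / (4 * a ^ 3) + w a ^ 4 / (4 * a ^ 2))) a := fun a ha =>
    hasDerivAt_radialEnergy (ne_of_gt ha) (hw a ha) (hw' a ha) (hode a ha)
  refine antitoneOn_of_deriv_nonpos (convex_Ioi 0)
    (fun a ha => (hE a ha).continuousAt.continuousWithinAt) ?_ ?_
  · rw [interior_Ioi]
    exact fun a ha => (hE a ha).differentiableAt.differentiableWithinAt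
  · rw [interior_Ioi]
    intro a (ha : 0 < a)
    rw [(hE a ha).deriv, neg_nonpos]
    positivity

theorem abs_le_sqrt_of_antitoneOn_radialEnergy (hμ : 0 < μ)
    (hE : AntitoneOn (radialEnergy μ w w') (Ioi 0)) {a₀ a : ℝ} (ha₀ : 0 < a₀) (ha : a₀ ≤ a) :
    |w a| ≤ √(2 * radialEnergy μ w w' a₀ / μ) ∧ |w' a| ≤ √(2 * radialEnergy μ w w' a₀) := by
  have hpos : 0 < a := ha₀.trans_le ha
  have hle : w' a ^ 2 / 2 + w a ^ 2 / (8 * a ^ 2) + μ / 2 * w a ^ 2 + w a ^ 4 / (4 * a)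
      ≤ radialEnergy μ w w' a₀ := hE ha₀ hpos ha
  have h₁ : 0 ≤ w a ^ 2 / (8 * a ^ 2) := by positivity
  have h₂ : 0 ≤ w a ^ 4 / (4 * a) := by positivity
  have h₃ : 0 ≤ μ * w a ^ 2 := by positivity
  have h₄ : 0 ≤ w' a ^ 2 := sq_nonneg _
  refine ⟨Real.abs_le_sqrt ?_, Real.abs_le_sqrt (by linarith)⟩
  rw [le_div_iff₀ hμ]
  linarith

end RadialEnergy

section SqrtSubstitution

variable {v v' : ℝ → ℝ} {a : ℝ}

theorem hasDerivAt_sqrt_mul {v'a : ℝ} (ha : a ≠ 0) (hv : HasDerivAt v v'a a) :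
    HasDerivAt (fun b => √b * v b) (v a / (2 * √a) + √a * v'a) a := by
  refine ((Real.hasDerivAt_sqrt ha).mul hv).congr_deriv ?_
  ring

theorem hasDerivAt_deriv_sqrt_mul {v''a : ℝ} (ha : 0 < a) (hv : HasDerivAt v (v' a) a)
    (hv' : HasDerivAt v' v''a a) :
    HasDerivAt (fun b => v b / (2 * √b) + √b * v' b)
      (√a * (v''a + v' a / a) - v a / (4 * a * √a)) a := by
  have hs : 0 < √a := Real.sqrt_pos.mpr ha
  have hsq := Real.hasDerivAt_sqrt ha.ne'
  refine ((hv.div (hsq.const_mul 2) (by positivity)).add (hsq.mul hv')).congr_deriv ?_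
  obtain ⟨t, ht, rfl⟩ : ∃ t, 0 < t ∧ a = t ^ 2 := ⟨√a, hs, (Real.sq_sqrt ha.le).symm⟩
  rw [Real.sqrt_sq ht.le]
  field_simp
  ring

theorem sqrt_mul_radial_equation {μ v''a : ℝ} (ha : 0 < a)
    (hode : v''a + v' a / a + μ * v a + v a ^ 3 = 0) :
    (√a * (v''a + v' a / a) - v a / (4 * a * √a)) + (1 / (4 * a ^ 2) + μ) * (√a * v a)
      + (√a * v a) ^ 3 / a = 0 := by
  have hv''a : v''a + v' a / a = -(μ * v a + v a ^ 3) := by linear_combination hode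
  rw [hv''a]
  obtain ⟨t, ht, rfl⟩ : ∃ t, 0 < t ∧ a = t ^ 2 :=
    ⟨√a, Real.sqrt_pos.mpr ha, (Real.sq_sqrt ha.le).symm⟩
  rw [Real.sqrt_sq ht.le]
  field_simp
  ring

end SqrtSubstitution

theorem abs_le_of_abs_sqrt_mul_le {s x y B D : ℝ} (hs : 1 ≤ s) (hB : |s * x| ≤ B)
    (hD : |x / (2 * s) + s * y| ≤ D) :
    |x| ≤ B / s ∧ |x| ≤ B ∧ |y| ≤ D + B / 2 := by
  have hs0 : 0 < s := one_pos.trans_le hs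
  have hx : |x| ≤ B / s := by
    rw [le_div_iff₀ hs0]
    calc |x| * s = |s * x| := by rw [abs_mul, abs_of_pos hs0, mul_comm]
      _ ≤ B := hB
  have hxB : |x| ≤ B := hx.trans (div_le_self ((abs_nonneg _).trans hB) hs)
  have hx2 : |x / (2 * s)| ≤ B / 2 := by
    rw [abs_div, abs_of_pos (by positivity : 0 < 2 * s), div_le_div_iff₀ (by positivity) two_pos]
    nlinarith [abs_nonneg x]
  refine ⟨hx, hxB, ?_⟩
  calc |y| ≤ s * |y| := le_mul_of_one_le_left (abs_nonneg _) hs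
    _ = |x / (2 * s) + s * y - x / (2 * s)| := by rw [add_sub_cancel_left, abs_mul, abs_of_pos hs0]
    _ ≤ |x / (2 * s) + s * y| + |x / (2 * s)| := abs_sub _ _
    _ ≤ D + B / 2 := add_le_add hD hx2

theorem stmt4_general (μ : ℝ) (hμ : 0 < μ) (v : ℝ → ℝ)
    (hv : ContDiffOn ℝ 2 v (Set.Ioi 0))
    (hode : ∀ a > (0:ℝ), deriv (deriv v) a + deriv v a / a + μ * v a + (v a) ^ 3 = 0) :
    ∃ C : ℝ, ∀ a ≥ (1:ℝ),
      |v a| ≤ C ∧ |deriv v a| ≤ C ∧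
      |Real.sqrt a * v a| ≤ C ∧ |deriv (fun b => Real.sqrt b * v b) a| ≤ C ∧
      |v a| ≤ C / Real.sqrt a := by
  set w : ℝ → ℝ := fun b => √b * v b
  set w' : ℝ → ℝ := fun b => v b / (2 * √b) + √b * deriv v b
  have hreg := fun a (ha : 0 < a) =>
    hasDerivAt_and_hasDerivAt_deriv_of_contDiffOn_two hv isOpen_Ioi (mem_Ioi.mpr ha)
  have hw : ∀ a > 0, HasDerivAt w (w' a) a := fun a ha => hasDerivAt_sqrt_mul ha.ne' (hreg a ha).1
  have hE : AntitoneOn (radialEnergy μ w w') (Ioi 0) :=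
    antitoneOn_radialEnergy hw
      (fun a ha => hasDerivAt_deriv_sqrt_mul ha (hreg a ha).1 (hreg a ha).2)
      (fun a ha => sqrt_mul_radial_equation ha (hode a ha))
  set B := √(2 * radialEnergy μ w w' 1 / μ)
  set D := √(2 * radialEnergy μ w w' 1)
  refine ⟨B + D, fun a ha => ?_⟩
  obtain ⟨hwB, hw'D⟩ := abs_le_sqrt_of_antitoneOn_radialEnergy hμ hE one_pos ha
  have hs : 1 ≤ √a := Real.one_le_sqrt.mpr ha
  obtain ⟨hv_sqrt, hvB, hv'⟩ := abs_le_of_abs_sqrt_mul_le hs hwB hw'D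
  have hB : 0 ≤ B := Real.sqrt_nonneg _
  have hD : 0 ≤ D := Real.sqrt_nonneg _
  refine ⟨by linarith, by linarith, by linarith, ?_, ?_⟩
  · rw [(hw a (by linarith)).deriv]
    linarith
  · exact hv_sqrt.trans (div_le_div_of_nonneg_right (by linarith) (by positivity))

/-- For a nontrivial solution of the focusing equation `v'' + v'/a + μv + v³ = 0`, `μ > 0`,
continuous up to `a = 0` with `a·v'(a) → 0`, the functions `v`, `v'`, `√a·v` and `(√a·v)'`
are bounded on `[1,∞)`, and `v(a) = O(a^{-1/2})`. -/
theorem stmt4 (μ : ℝ) (hμ : 0 < μ) (v : ℝ → ℝ)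
    (hv : ContDiffOn ℝ 2 v (Set.Ioi 0))
    (hode : ∀ a > (0:ℝ), deriv (deriv v) a + deriv v a / a + μ * v a + (v a) ^ 3 = 0)
    (hv0 : ContinuousWithinAt v (Set.Ici 0) 0)
    (hav0 : Filter.Tendsto (fun a => a * deriv v a) (nhdsWithin 0 (Set.Ioi 0)) (nhds 0))
    (hnt : ∃ a > (0:ℝ), v a ≠ 0) :
    ∃ C : ℝ, ∀ a ≥ (1:ℝ),
      |v a| ≤ C ∧ |deriv v a| ≤ C ∧
      |Real.sqrt a * v a| ≤ C ∧ |deriv (fun b => Real.sqrt b * v b) a| ≤ C ∧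
      |v a| ≤ C / Real.sqrt a :=
  stmt4_general μ hμ v hv hode
end

section
/- Let v : [0,∞) → ℝ be C¹ with v'(0)=0, C² on (0,∞), solving the focusing equation v'' + v'/a - v + v³ = 0 (μ = -1). Then |v(a)² - 1| ≤ |v(0)² - 1| for all a > 0. In particular if v(0) ∈ (0,2), then v(a) > 0 for all a ≥ 0. -/
open Real Set Filter Topology

/-!
The energy `E = v'²/2 + (v² - 1)²/4` satisfies `E' = -v'²/a ≤ 0`, which gives the first claim.
For the second, a first zero `c` of `v` forces `E(c) ≥ 1/4`, hence `v(0) ≥ √2`; let `b` be the first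
time `v = √2`. On `[0, b]` the flux `a v'` is controlled through `(a v')' = a (v - v³)`, which
bounds from below the energy dissipated before `b` and from above `G(b)`, where
`G = a² (E - 1/4)` has `G' = a v² (v² - 2) / 2`. On `[b, c]`, where `v² ≤ 2`, the function
`(2 - v²)^(3/2) / (3√2)` climbs by `2/3`, and AM-GM bounds its derivative by the dissipation and
by `-G'`; so `2/3 ≤ (17/50) (E(b) - 1/4) + (25/34) G(b)`, which the bounds at `b` rule out when
`v(0) < 2`.
-/

theorem sub_le_sub_of_hasDerivAt_le {f g f' g' : ℝ → ℝ} {a b : ℝ} (hab : a ≤ b)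
    (hf : ContinuousOn f (Icc a b)) (hg : ContinuousOn g (Icc a b))
    (hf' : ∀ x ∈ Ioo a b, HasDerivAt f (f' x) x) (hg' : ∀ x ∈ Ioo a b, HasDerivAt g (g' x) x)
    (hle : ∀ x ∈ Ioo a b, f' x ≤ g' x) : f b - f a ≤ g b - g a := by
  have hmono : MonotoneOn (g - f) (Icc a b) := by
    refine monotoneOn_of_hasDerivWithinAt_nonneg (f' := g' - f') (convex_Icc a b) (hg.sub hf)
      ?_ ?_ <;> rw [interior_Icc]
    · exact fun x hx => ((hg' x hx).sub (hf' x hx)).hasDerivWithinAt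
    · exact fun x hx => sub_nonneg.2 (hle x hx)
  have := hmono (left_mem_Icc.2 hab) (right_mem_Icc.2 hab) hab
  simp only [Pi.sub_apply] at this
  linarith

theorem exists_eq_forall_lt_of_le {f : ℝ → ℝ} {a b c : ℝ} (hab : a ≤ b)
    (hf : ContinuousOn f (Icc a b)) (ha : c ≤ f a) (hb : f b ≤ c) :
    ∃ t ∈ Icc a b, f t = c ∧ ∀ s ∈ Ico a t, c < f s := by
  set S := Icc a b ∩ f ⁻¹' Iic c
  have hS : IsClosed S := hf.preimage_isClosed_of_isClosed isClosed_Icc isClosed_Iic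
  have hbS : b ∈ S := ⟨right_mem_Icc.2 hab, hb⟩
  have hSbdd : BddBelow S := ⟨a, fun s hs => hs.1.1⟩
  have htS : sInf S ∈ S := hS.csInf_mem ⟨b, hbS⟩ hSbdd
  have hlt : ∀ s ∈ Ico a (sInf S), c < f s := fun s hs => by
    by_contra! hfs
    exact (csInf_le hSbdd ⟨⟨hs.1, hs.2.le.trans htS.1.2⟩, hfs⟩).not_gt hs.2
  refine ⟨sInf S, htS.1, le_antisymm htS.2 ?_, hlt⟩
  obtain ⟨t, ht, hft⟩ := intermediate_value_Icc' htS.1.1 (hf.mono (Icc_subset_Icc_right htS.1.2))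
    ⟨htS.2, ha⟩
  rcases ht.2.lt_or_eq with htlt | rfl
  · exact (hlt t ⟨ht.1, htlt⟩).ne hft.symm |>.elim
  · exact hft.ge

theorem cube_sub_self_le_cube_sub_self {y z : ℝ} (hy : 1 ≤ y) (hyz : y ≤ z) :
    y ^ 3 - y ≤ z ^ 3 - z := by
  nlinarith [mul_nonneg (sub_nonneg.2 hyz) (by nlinarith : 0 ≤ z ^ 2 + z * y + y ^ 2 - 1)]

theorem cube_sub_self_add_five_mul_le {y z : ℝ} (hy : √2 ≤ y) (hyz : y ≤ z) :
    y ^ 3 - y + 5 * (z - y) ≤ z ^ 3 - z := by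
  have hy0 : 0 ≤ y := (sqrt_nonneg 2).trans hy
  have hy2 : 2 ≤ y ^ 2 := (sqrt_le_iff.1 hy).2
  have : 6 ≤ z ^ 2 + z * y + y ^ 2 := by
    nlinarith [mul_le_mul_of_nonneg_right hyz hy0, mul_le_mul hyz hyz hy0 (hy0.trans hyz)]
  nlinarith [mul_nonneg (sub_nonneg.2 hyz) (sub_nonneg.2 this)]

theorem sub_one_sub_log_le {w : ℝ} (h1 : 1 ≤ w) (h3 : w ≤ 3) : w - 1 - log w ≤ 2 - log 3 := by
  have hw : 0 < w := by linarith
  have := log_le_sub_one_of_pos (div_pos three_pos hw)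
  rw [log_div three_ne_zero hw.ne'] at this
  have : 3 / w - 1 ≤ 3 - w := by
    rw [div_sub_one hw.ne', div_le_iff₀ hw]
    nlinarith
  linarith

theorem quartic_sub_sq_le {t : ℝ} (ht : √2 ≤ t) (ht2 : t < 2) :
    (t ^ 4 - 2 * t ^ 2) / 8 - 5 / 48 * (t - √2) ^ 2 ≤ 97 / 100 := by
  have hs2 := sq_sqrt (zero_le_two : (0:ℝ) ≤ 2)
  have hs2lt : √2 < 1.4143 := by nlinarith [sqrt_nonneg 2]
  have ht2' : 2 ≤ t ^ 2 := (sqrt_le_iff.1 ht).2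
  rcases le_or_gt t 1.98 with ht1 | ht1
  · have : t ^ 2 ≤ 3.9204 := by nlinarith [sqrt_nonneg 2]
    nlinarith [mul_le_mul this (by linarith : t ^ 2 - 2 ≤ 1.9204) (by linarith) (by norm_num),
      sq_nonneg (t - √2)]
  · have : 0.32 ≤ (t - √2) ^ 2 := by nlinarith
    have : t ^ 2 < 4 := by nlinarith
    nlinarith

theorem neg_mul_sqrt_two_sub_sq_le {x y p : ℝ} (hx : 0 < x) (hy : y ^ 2 ≤ 2) :
    -(y * p * √(2 - y ^ 2) / √2) ≤
      17 / 50 * (p ^ 2 / x) + 25 / 68 * (x * (y ^ 2 * (2 - y ^ 2))) := by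
  set T := y * √(2 - y ^ 2) / √2
  have hT : x * T ^ 2 = x * (y ^ 2 * (2 - y ^ 2) / 2) := by
    rw [div_pow, mul_pow, sq_sqrt (sub_nonneg.2 hy), sq_sqrt zero_le_two]
  have hsq : 0 ≤ (p + 25 / 17 * x * T) ^ 2 / x := by positivity
  have hexp : (p + 25 / 17 * x * T) ^ 2 / x =
      p ^ 2 / x + 50 / 17 * (p * T) + (25 / 17) ^ 2 * (x * T ^ 2) := by
    field_simp
    ring
  have : y * p * √(2 - y ^ 2) / √2 = p * T := by ring
  rw [this]
  nlinarith

/-- `v'` stands for the derivative of `v` on `[0, ∞)`, one-sided at `0`, so that every quantity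
below is continuous up to `a = 0`. -/
structure IsFocusingSolution (v v' : ℝ → ℝ) : Prop where
  continuousOn : ContinuousOn v (Ici 0)
  continuousOn_deriv : ContinuousOn v' (Ici 0)
  deriv_zero : v' 0 = 0
  hasDerivAt : ∀ a > 0, HasDerivAt v (v' a) a
  hasDerivAt_deriv : ∀ a > 0, HasDerivAt v' (v a - v a ^ 3 - v' a / a) a

noncomputable def energy (v v' : ℝ → ℝ) (a : ℝ) : ℝ := v' a ^ 2 / 2 + (v a ^ 2 - 1) ^ 2 / 4

noncomputable def weightedEnergy (v v' : ℝ → ℝ) (a : ℝ) : ℝ := a ^ 2 * (energy v v' a - 1 / 4)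

theorem weightedEnergy_zero (v v' : ℝ → ℝ) : weightedEnergy v v' 0 = 0 := by
  simp [weightedEnergy]

namespace IsFocusingSolution

theorem of_contDiffOn {v : ℝ → ℝ} (hv1 : ContDiffOn ℝ 1 v (Ici 0))
    (hv2 : ContDiffOn ℝ 2 v (Ioi 0))
    (hode : ∀ a > (0:ℝ), deriv (deriv v) a + deriv v a / a - v a + v a ^ 3 = 0)
    (hv'0 : derivWithin v (Ici 0) 0 = 0) : IsFocusingSolution v (derivWithin v (Ici 0)) := by
  have hderiv : ∀ a > (0:ℝ), derivWithin v (Ici 0) =ᶠ[𝓝 a] deriv v := fun a ha =>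
    eventually_of_mem (Ioi_mem_nhds ha) fun x hx => derivWithin_of_mem_nhds (Ici_mem_nhds hx)
  have hv2' : ContDiffOn ℝ 1 (deriv v) (Ioi 0) :=
    (hv2.derivWithin (uniqueDiffOn_Ioi 0) (by norm_num)).congr
      fun x hx => (derivWithin_of_isOpen isOpen_Ioi hx).symm
  refine ⟨hv1.continuousOn, hv1.continuousOn_derivWithin (uniqueDiffOn_Ici 0) le_rfl, hv'0,
    fun a ha => ?_, fun a ha => ?_⟩
  · rw [(hderiv a ha).eq_of_nhds]
    exact ((hv1.differentiableOn one_ne_zero a (mem_Ici.2 ha.le)).differentiableAt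
      (Ici_mem_nhds ha)).hasDerivAt
  · have := (((hv2'.differentiableOn one_ne_zero) a ha).differentiableAt
      (Ioi_mem_nhds ha)).hasDerivAt.congr_of_eventuallyEq (hderiv a ha)
    refine this.congr_deriv ?_
    rw [(hderiv a ha).eq_of_nhds]
    linarith [hode a ha]

variable {v v' : ℝ → ℝ}

theorem hasDerivAt_energy (h : IsFocusingSolution v v') {a : ℝ} (ha : 0 < a) :
    HasDerivAt (energy v v') (-v' a ^ 2 / a) a := by
  have := (((h.hasDerivAt_deriv a ha).pow 2).div_const 2).add
    (((((h.hasDerivAt a ha).pow 2).sub_const 1).pow 2).div_const 4)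
  refine this.congr_deriv ?_
  simp only [Pi.pow_apply]
  field_simp
  ring

theorem continuousOn_energy (h : IsFocusingSolution v v') : ContinuousOn (energy v v') (Ici 0) :=
  ((h.continuousOn_deriv.pow 2).div_const 2).add
    ((((h.continuousOn.pow 2).sub continuousOn_const).pow 2).div_const 4)

theorem energy_zero (h : IsFocusingSolution v v') : energy v v' 0 = (v 0 ^ 2 - 1) ^ 2 / 4 := by
  simp [energy, h.deriv_zero]

theorem antitoneOn_energy (h : IsFocusingSolution v v') : AntitoneOn (energy v v') (Ici 0) := by
  refine antitoneOn_of_hasDerivWithinAt_nonpos (f' := fun a => -v' a ^ 2 / a) (convex_Ici 0)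
    h.continuousOn_energy ?_ ?_ <;> rw [interior_Ici]
  · exact fun a ha => (h.hasDerivAt_energy ha).hasDerivWithinAt
  · exact fun a ha => div_nonpos_of_nonpos_of_nonneg (neg_nonpos.2 (sq_nonneg _)) (le_of_lt ha)

theorem abs_sq_sub_one_le (h : IsFocusingSolution v v') {a : ℝ} (ha : 0 ≤ a) :
    |v a ^ 2 - 1| ≤ |v 0 ^ 2 - 1| := by
  have := h.antitoneOn_energy self_mem_Ici ha ha
  rw [h.energy_zero, energy] at this
  exact sq_le_sq.1 (by nlinarith [sq_nonneg (v' a)])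

theorem hasDerivAt_mul_deriv (h : IsFocusingSolution v v') {a : ℝ} (ha : 0 < a) :
    HasDerivAt (fun x => x * v' x) (a * (v a - v a ^ 3)) a := by
  refine ((hasDerivAt_id a).mul (h.hasDerivAt_deriv a ha)).congr_deriv ?_
  simp only [id]
  field_simp
  ring

theorem continuousOn_mul_deriv (h : IsFocusingSolution v v') :
    ContinuousOn (fun x => x * v' x) (Ici 0) :=
  continuousOn_id.mul h.continuousOn_deriv

theorem hasDerivAt_weightedEnergy (h : IsFocusingSolution v v') {a : ℝ} (ha : 0 < a) :
    HasDerivAt (weightedEnergy v v') (a / 2 * (v a ^ 2 * (v a ^ 2 - 2))) a := by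
  refine ((hasDerivAt_pow 2 a).mul ((h.hasDerivAt_energy ha).sub_const (1 / 4))).congr_deriv ?_
  simp only [energy]
  field_simp
  ring

theorem continuousOn_weightedEnergy (h : IsFocusingSolution v v') :
    ContinuousOn (weightedEnergy v v') (Ici 0) :=
  (continuousOn_pow 2).mul (h.continuousOn_energy.sub continuousOn_const)

theorem mul_deriv_nonpos (h : IsFocusingSolution v v') {c : ℝ} (hv : ∀ x ∈ Icc 0 c, 1 ≤ v x)
    {a : ℝ} (ha : a ∈ Icc 0 c) : a * v' a ≤ 0 := by
  have := sub_le_sub_of_hasDerivAt_le ha.1 (h.continuousOn_mul_deriv.mono Icc_subset_Ici_self)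
    continuousOn_const (fun x hx => h.hasDerivAt_mul_deriv hx.1)
    (fun x _ => hasDerivAt_const x (0:ℝ)) fun x hx => by
      have := hv x ⟨hx.1.le, hx.2.le.trans ha.2⟩
      have := hx.1
      have : 0 ≤ x * v x * (v x - 1) * (v x + 1) := by positivity
      nlinarith
  simpa using this

theorem antitoneOn_of_one_le (h : IsFocusingSolution v v') {c : ℝ}
    (hv : ∀ x ∈ Icc 0 c, 1 ≤ v x) : AntitoneOn v (Icc 0 c) := by
  refine antitoneOn_of_hasDerivWithinAt_nonpos (f' := v') (convex_Icc 0 c)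
    (h.continuousOn.mono Icc_subset_Ici_self) ?_ ?_ <;> rw [interior_Icc]
  · exact fun x hx => (h.hasDerivAt x hx.1).hasDerivWithinAt
  · exact fun x hx => nonpos_of_mul_nonpos_right (h.mul_deriv_nonpos hv ⟨hx.1.le, hx.2.le⟩) hx.1

theorem half_mul_cube_sub_le_neg_deriv (h : IsFocusingSolution v v') {b : ℝ}
    (hv : ∀ x ∈ Icc 0 b, 1 ≤ v x) {a : ℝ} (ha : a ∈ Ioc 0 b) :
    a / 2 * (v a ^ 3 - v a) ≤ -v' a := by
  have ha' : a ∈ Icc 0 b := ⟨ha.1.le, ha.2⟩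
  have := sub_le_sub_of_hasDerivAt_le ha.1.le (h.continuousOn_mul_deriv.mono Icc_subset_Ici_self)
    (g := fun x => -(v a ^ 3 - v a) / 2 * x ^ 2) (g' := fun x => -(v a ^ 3 - v a) * x)
    (continuous_const.mul (continuous_pow 2)).continuousOn
    (fun x hx => h.hasDerivAt_mul_deriv hx.1)
    (fun x _ => ((hasDerivAt_pow 2 x).const_mul _).congr_deriv (by ring)) fun x hx => by
      have hx' : x ∈ Icc 0 b := ⟨hx.1.le, hx.2.le.trans ha.2⟩
      have := cube_sub_self_le_cube_sub_self (hv a ha')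
        (h.antitoneOn_of_one_le hv hx' ha' hx.2.le)
      nlinarith [mul_le_mul_of_nonneg_left this hx.1.le]
  refine le_of_mul_le_mul_left ?_ ha.1
  simp only [zero_mul, sub_zero] at this
  nlinarith

theorem neg_deriv_le_half_mul_cube_sub (h : IsFocusingSolution v v') {b : ℝ}
    (hv : ∀ x ∈ Icc 0 b, 1 ≤ v x) {a : ℝ} (ha : a ∈ Ioc 0 b) :
    -v' a ≤ a / 2 * (v 0 ^ 3 - v 0) := by
  have := sub_le_sub_of_hasDerivAt_le ha.1.le
    (f := fun x => -(v 0 ^ 3 - v 0) / 2 * x ^ 2) (f' := fun x => -(v 0 ^ 3 - v 0) * x)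
    (continuous_const.mul (continuous_pow 2)).continuousOn
    (h.continuousOn_mul_deriv.mono Icc_subset_Ici_self)
    (fun x _ => ((hasDerivAt_pow 2 x).const_mul _).congr_deriv (by ring))
    (fun x hx => h.hasDerivAt_mul_deriv hx.1) fun x hx => by
      have hx' : x ∈ Icc 0 b := ⟨hx.1.le, hx.2.le.trans ha.2⟩
      have := cube_sub_self_le_cube_sub_self (hv x hx')
        (h.antitoneOn_of_one_le hv ⟨le_rfl, hx'.1.trans hx'.2⟩ hx' hx'.1)
      nlinarith [mul_le_mul_of_nonneg_left this hx.1.le]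
  refine le_of_mul_le_mul_left ?_ ha.1
  simp only [zero_mul, sub_zero] at this
  nlinarith

theorem cube_sub_mul_sq_sub_sq_le (h : IsFocusingSolution v v') {b : ℝ}
    (hv : ∀ x ∈ Icc 0 b, 1 ≤ v x) {a x : ℝ} (ha : a ∈ Ioc 0 b) (hx : x ∈ Icc 0 a) :
    (v a ^ 3 - v a) * (a ^ 2 - x ^ 2) / 4 ≤ v x - v a := by
  have ha' : a ∈ Icc 0 b := ⟨ha.1.le, ha.2⟩
  have := sub_le_sub_of_hasDerivAt_le hx.2 (h.continuousOn.mono fun y hy => hx.1.trans hy.1)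
    (g := fun y => -(v a ^ 3 - v a) / 4 * y ^ 2) (g' := fun y => -(v a ^ 3 - v a) / 2 * y)
    (continuous_const.mul (continuous_pow 2)).continuousOn
    (fun y hy => h.hasDerivAt y (hx.1.trans_lt hy.1))
    (fun y _ => ((hasDerivAt_pow 2 y).const_mul _).congr_deriv (by ring)) fun y hy => by
      have hy0 : 0 < y := hx.1.trans_lt hy.1
      have hy' : y ∈ Icc 0 b := ⟨hy0.le, hy.2.le.trans ha.2⟩
      have hmono := cube_sub_self_le_cube_sub_self (hv a ha')
        (h.antitoneOn_of_one_le hv hy' ha' hy.2.le)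
      have := h.half_mul_cube_sub_le_neg_deriv hv ⟨hy0, hy'.2⟩
      nlinarith [mul_le_mul_of_nonneg_left hmono hy0.le]
  linarith

theorem sub_le_cube_sub_mul_sq (h : IsFocusingSolution v v') {b : ℝ}
    (hv : ∀ x ∈ Icc 0 b, 1 ≤ v x) {x : ℝ} (hx : x ∈ Icc 0 b) :
    v 0 - v x ≤ (v 0 ^ 3 - v 0) / 4 * x ^ 2 := by
  have := sub_le_sub_of_hasDerivAt_le hx.1
    (f := fun y => -(v 0 ^ 3 - v 0) / 4 * y ^ 2) (f' := fun y => -(v 0 ^ 3 - v 0) / 2 * y)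
    (continuous_const.mul (continuous_pow 2)).continuousOn
    (h.continuousOn.mono Icc_subset_Ici_self)
    (fun y _ => ((hasDerivAt_pow 2 y).const_mul _).congr_deriv (by ring))
    (fun y hy => h.hasDerivAt y hy.1) fun y hy => by
      have := h.neg_deriv_le_half_mul_cube_sub hv ⟨hy.1, hy.2.le.trans hx.2⟩
      linarith
  linarith

-- The `5 a⁴ / 16` term is not needed when `v 0 ≤ 1.98`, but without it the final estimate fails
-- as `v 0 → 2`.
theorem cube_sub_mul_le_neg_mul_deriv (h : IsFocusingSolution v v') {b : ℝ}
    (hv : ∀ x ∈ Icc 0 b, √2 ≤ v x) {a : ℝ} (ha : a ∈ Ioc 0 b) :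
    (v a ^ 3 - v a) * (a ^ 2 / 2 + 5 * a ^ 4 / 16) ≤ -(a * v' a) := by
  have hv1 : ∀ x ∈ Icc 0 b, 1 ≤ v x := fun x hx => one_lt_sqrt_two.le.trans (hv x hx)
  have ha' : a ∈ Icc 0 b := ⟨ha.1.le, ha.2⟩
  set c := v a ^ 3 - v a
  have := sub_le_sub_of_hasDerivAt_le ha.1.le (h.continuousOn_mul_deriv.mono Icc_subset_Ici_self)
    (g := fun y => -c * (y ^ 2 / 2 + 5 * a ^ 2 / 8 * y ^ 2 - 5 / 16 * y ^ 4))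
    (g' := fun y => -c * (y + 5 * a ^ 2 / 4 * y - 5 / 4 * y ^ 3))
    (by fun_prop) (fun y hy => h.hasDerivAt_mul_deriv hy.1)
    (fun y _ => ((((hasDerivAt_pow 2 y).div_const 2).add ((hasDerivAt_pow 2 y).const_mul _)).sub
      ((hasDerivAt_pow 4 y).const_mul _)).const_mul _ |>.congr_deriv (by ring)) fun y hy => by
      have hy' : y ∈ Icc 0 b := ⟨hy.1.le, hy.2.le.trans ha.2⟩
      have hfive := cube_sub_self_add_five_mul_le (hv a ha')
        (h.antitoneOn_of_one_le hv1 hy' ha' hy.2.le)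
      have hdrop := h.cube_sub_mul_sq_sub_sq_le hv1 ha ⟨hy.1.le, hy.2.le⟩
      nlinarith [mul_le_mul_of_nonneg_left (by linarith : c + 5 * (c * (a ^ 2 - y ^ 2) / 4) ≤
        v y ^ 3 - v y) hy.1.le]
  simp only [zero_mul, sub_zero] at this
  nlinarith

theorem neg_sq_deriv_div_le (h : IsFocusingSolution v v') {b : ℝ}
    (hv : ∀ x ∈ Icc 0 b, √2 ≤ v x) (h2 : v 0 < 2) {x : ℝ} (hx : x ∈ Ioc 0 b) :
    -v' x ^ 2 / x ≤ v' x * ((v x ^ 3 - v x) / 2 + 5 / 24 * (v 0 - v x)) := by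
  have hv1 : ∀ x ∈ Icc 0 b, 1 ≤ v x := fun x hx => one_lt_sqrt_two.le.trans (hv x hx)
  have hx' : x ∈ Icc 0 b := ⟨hx.1.le, hx.2⟩
  have hvx := hv x hx'
  have hvx0 := h.antitoneOn_of_one_le hv1 ⟨le_rfl, hx.1.le.trans hx.2⟩ hx' hx.1.le
  have hg1 : 1 ≤ v x ^ 3 - v x := by
    have hsq : 2 ≤ v x ^ 2 := (sqrt_le_iff.1 hvx).2
    have := mul_le_mul_of_nonneg_left (by linarith : 1 ≤ v x ^ 2 - 1)
      (zero_le_one.trans (hv1 x hx'))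
    nlinarith [hv1 x hx']
  have hg0 : v 0 ^ 3 - v 0 ≤ 6 := by
    nlinarith [mul_nonneg (by linarith : (0:ℝ) ≤ 2 - v 0)
      (by nlinarith : 0 ≤ v 0 ^ 2 + 2 * v 0 + 3)]
  have hq : 0 ≤ -v' x := by
    have := h.half_mul_cube_sub_le_neg_deriv hv1 hx
    have : 0 ≤ x / 2 * (v x ^ 3 - v x) := mul_nonneg (by linarith [hx.1]) (by linarith)
    linarith
  have hdrop : 5 / 24 * (v 0 - v x) ≤ 5 / 16 * x ^ 2 := by
    nlinarith [h.sub_le_cube_sub_mul_sq hv1 hx', sq_nonneg x]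
  have hpump := h.cube_sub_mul_le_neg_mul_deriv hv hx
  have hxA : x * ((v x ^ 3 - v x) / 2 + 5 / 24 * (v 0 - v x)) ≤ -v' x := by
    refine le_of_mul_le_mul_left ?_ hx.1
    nlinarith [mul_le_mul_of_nonneg_left hdrop (by positivity : (0:ℝ) ≤ x ^ 2),
      mul_le_mul_of_nonneg_right hg1 (by positivity : (0:ℝ) ≤ 5 / 16 * x ^ 4)]
  rw [neg_div, neg_le, le_div_iff₀ hx.1]
  nlinarith [mul_le_mul_of_nonneg_left hxA hq]

theorem energy_le (h : IsFocusingSolution v v') {b : ℝ} (hb : 0 ≤ b)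
    (hv : ∀ x ∈ Icc 0 b, √2 ≤ v x) (h2 : v 0 < 2) :
    energy v v' b ≤ energy v v' 0 - (v 0 ^ 4 / 8 - v 0 ^ 2 / 4) + (v b ^ 4 / 8 - v b ^ 2 / 4)
      - 5 / 48 * (v 0 - v b) ^ 2 := by
  have hvc : ContinuousOn v (Icc 0 b) := h.continuousOn.mono Icc_subset_Ici_self
  have := sub_le_sub_of_hasDerivAt_le hb (h.continuousOn_energy.mono Icc_subset_Ici_self)
    (g := fun x => v x ^ 4 / 8 - v x ^ 2 / 4 - 5 / 48 * (v 0 - v x) ^ 2)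
    (g' := fun x => v' x * ((v x ^ 3 - v x) / 2 + 5 / 24 * (v 0 - v x)))
    (by fun_prop)
    (fun x hx => h.hasDerivAt_energy hx.1)
    (fun x hx => by
      have hd := h.hasDerivAt x hx.1
      exact ((((hd.pow 4).div_const 8).sub ((hd.pow 2).div_const 4)).sub
        (((hd.const_sub (v 0)).pow 2).const_mul (5 / 48))).congr_deriv (by ring))
    fun x hx => h.neg_sq_deriv_div_le hv h2 ⟨hx.1, hx.2.le⟩
  linarith

theorem weightedEnergy_le (h : IsFocusingSolution v v') {b : ℝ} (hb : 0 ≤ b)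
    (hv : ∀ x ∈ Icc 0 b, √2 ≤ v x) :
    weightedEnergy v v' b ≤
      (v 0 ^ 2 - log (v 0 ^ 2 - 1)) / 2 - (v b ^ 2 - log (v b ^ 2 - 1)) / 2 := by
  have hv1 : ∀ x ∈ Icc 0 b, 1 ≤ v x := fun x hx => one_lt_sqrt_two.le.trans (hv x hx)
  have hsq : ∀ x ∈ Icc 0 b, 2 ≤ v x ^ 2 := fun x hx => (sqrt_le_iff.1 (hv x hx)).2
  have hne : ∀ x ∈ Icc 0 b, v x ^ 2 - 1 ≠ 0 := fun x hx => by linarith [hsq x hx]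
  have hvc : ContinuousOn v (Icc 0 b) := h.continuousOn.mono Icc_subset_Ici_self
  have := sub_le_sub_of_hasDerivAt_le hb
    (h.continuousOn_weightedEnergy.mono Icc_subset_Ici_self)
    (g := fun x => -((v x ^ 2 - log (v x ^ 2 - 1)) / 2))
    (g' := fun x => -(v' x * (v x * (v x ^ 2 - 2) / (v x ^ 2 - 1))))
    (((hvc.pow 2).sub (((hvc.pow 2).sub continuousOn_const).log hne)).div_const 2).neg
    (fun x hx => h.hasDerivAt_weightedEnergy hx.1)
    (fun x hx => by
      have hd := h.hasDerivAt x hx.1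
      refine (((hd.pow 2).sub (((hd.pow 2).sub_const 1).log (hne x ⟨hx.1.le, hx.2.le⟩))).div_const
        2).neg.congr_deriv ?_
      simp only [Pi.pow_apply]
      field_simp [hne x ⟨hx.1.le, hx.2.le⟩]
      ring)
    fun x hx => by
      have hx' : x ∈ Icc 0 b := ⟨hx.1.le, hx.2.le⟩
      have hpump := h.half_mul_cube_sub_le_neg_deriv hv1 ⟨hx.1, hx.2.le⟩
      have hP : 0 ≤ v x * (v x ^ 2 - 2) / (v x ^ 2 - 1) := by
        have := hsq x hx'; have := hv1 x hx'
        exact div_nonneg (mul_nonneg (by linarith) (by linarith)) (by linarith)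
      have hid : (v x ^ 3 - v x) * (v x * (v x ^ 2 - 2) / (v x ^ 2 - 1)) =
          v x ^ 2 * (v x ^ 2 - 2) := by
        field_simp [hne x hx']
      calc x / 2 * (v x ^ 2 * (v x ^ 2 - 2))
          = x / 2 * (v x ^ 3 - v x) * (v x * (v x ^ 2 - 2) / (v x ^ 2 - 1)) := by
            rw [mul_assoc, hid]
        _ ≤ -v' x * (v x * (v x ^ 2 - 2) / (v x ^ 2 - 1)) :=
            mul_le_mul_of_nonneg_right hpump hP
        _ = _ := by ring
  rw [weightedEnergy_zero] at this
  linarith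

-- Where `v` leaves `[-√2, √2]` after `b`, its minimum on `[b, x]` is either a critical point with
-- `E < 1/4 ≤ E(c)`, or at least `√2`, in which case `v` is antitone on `[0, x]`.
theorem sq_le_two_of_first_zero (h : IsFocusingSolution v v') {b c : ℝ} (hb : 0 ≤ b)
    (habove : ∀ x ∈ Icc 0 b, √2 ≤ v x) (hvb : v b = √2) (hpos : ∀ x ∈ Ico b c, 0 < v x)
    (hvc : v c = 0) {x : ℝ} (hx : x ∈ Icc b c) : v x ^ 2 ≤ 2 := by
  have hs2 := sq_sqrt (zero_le_two : (0:ℝ) ≤ 2)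
  by_contra! hgt
  have hxc : x < c := hx.2.lt_of_ne (by rintro rfl; rw [hvc] at hgt; norm_num at hgt)
  have hvx : √2 < v x := by
    nlinarith [hpos x ⟨hx.1, hxc⟩, sqrt_nonneg 2]
  have hbx : b < x := hx.1.lt_of_ne (by rintro rfl; linarith)
  obtain ⟨μ, hμ, hmin⟩ := isCompact_Icc.exists_isMinOn (nonempty_Icc.2 hbx.le)
    (h.continuousOn.mono fun y hy => hb.trans hy.1)
  rcases le_or_gt √2 (v μ) with hμ2 | hμ2
  · have hall : ∀ y ∈ Icc 0 x, √2 ≤ v y := fun y hy => by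
      rcases le_or_gt y b with hyb | hyb
      · exact habove y ⟨hy.1, hyb⟩
      · exact hμ2.trans (hmin ⟨hyb.le, hy.2⟩)
    have := h.antitoneOn_of_one_le (fun y hy => one_lt_sqrt_two.le.trans (hall y hy))
      ⟨hb, hbx.le⟩ ⟨hb.trans hbx.le, le_rfl⟩ hbx.le
    linarith
  · have hμb : b < μ := hμ.1.lt_of_ne (by rintro rfl; linarith)
    have hμx : μ < x := hμ.2.lt_of_ne (by rintro rfl; linarith)
    have hμ0 : 0 < μ := hb.trans_lt hμb
    have hderiv : v' μ = 0 :=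
      (hmin.isLocalMin (Icc_mem_nhds hμb hμx)).hasDerivAt_eq_zero (h.hasDerivAt μ hμ0)
    have hvμ := hpos μ ⟨hμb.le, hμx.trans hxc⟩
    have hE : energy v v' c ≤ energy v v' μ :=
      h.antitoneOn_energy (mem_Ici.2 hμ0.le) (mem_Ici.2 (hμ0.le.trans (hμx.trans hxc).le))
        (hμx.trans hxc).le
    have hvμ2 : v μ ^ 2 < 2 := by nlinarith [sqrt_nonneg 2]
    rw [energy, energy, hvc, hderiv] at hE
    nlinarith [sq_nonneg (v' c), mul_pos hvμ hvμ]

theorem two_thirds_le (h : IsFocusingSolution v v') {b c : ℝ} (hb : 0 ≤ b) (hbc : b ≤ c)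
    (hvb : v b = √2) (hvc : v c = 0) (hv : ∀ x ∈ Icc b c, v x ^ 2 ≤ 2) :
    2 / 3 ≤ 17 / 50 * (energy v v' b - 1 / 4) + 25 / 34 * weightedEnergy v v' b := by
  have hIcc : Icc b c ⊆ Ici 0 := fun x hx => hb.trans hx.1
  have hvc' : ContinuousOn v (Icc b c) := h.continuousOn.mono hIcc
  have := sub_le_sub_of_hasDerivAt_le hbc
    (f := fun x => (2 - v x ^ 2) ^ (3 / 2 : ℝ) / (3 * √2))
    (f' := fun x => -(v x * v' x * √(2 - v x ^ 2) / √2))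
    (g := fun x => -(17 / 50) * energy v v' x - 25 / 34 * weightedEnergy v v' x)
    (g' := fun x => 17 / 50 * (v' x ^ 2 / x) + 25 / 68 * (x * (v x ^ 2 * (2 - v x ^ 2))))
    (((continuousOn_const.sub (hvc'.pow 2)).rpow_const fun _ _ => Or.inr (by norm_num)).div_const _)
    ((continuousOn_const.mul (h.continuousOn_energy.mono hIcc)).sub
      (continuousOn_const.mul (h.continuousOn_weightedEnergy.mono hIcc)))
    (fun x hx => by
      refine ((((h.hasDerivAt x (hb.trans_lt hx.1)).pow 2).const_sub 2).rpow_const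
        (Or.inr (by norm_num))).div_const _ |>.congr_deriv ?_
      rw [show (3 / 2 : ℝ) - 1 = 1 / 2 by norm_num, ← sqrt_eq_rpow, Pi.pow_apply]
      field_simp
      ring)
    (fun x hx => ((h.hasDerivAt_energy (hb.trans_lt hx.1)).const_mul _).sub
      ((h.hasDerivAt_weightedEnergy (hb.trans_lt hx.1)).const_mul _) |>.congr_deriv (by ring))
    fun x hx => neg_mul_sqrt_two_sub_sq_le (hb.trans_lt hx.1) (hv x ⟨hx.1.le, hx.2.le⟩)
  have hEc : 1 / 4 ≤ energy v v' c := by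
    rw [energy, hvc]; nlinarith [sq_nonneg (v' c)]
  have hGc : 0 ≤ weightedEnergy v v' c := mul_nonneg (sq_nonneg c) (by linarith)
  have h23 : (2 - 0 ^ 2 : ℝ) ^ (3 / 2 : ℝ) / (3 * √2) = 2 / 3 := by
    rw [show (2 - 0 ^ 2 : ℝ) = 2 by norm_num, show (3 / 2 : ℝ) = 1 + 1 / 2 by norm_num,
      rpow_add two_pos, rpow_one, ← sqrt_eq_rpow]
    field_simp
  simp only [hvb, hvc, sq_sqrt zero_le_two, sub_self, h23,
    zero_rpow (by norm_num : (3 / 2 : ℝ) ≠ 0), zero_div] at this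
  linarith

theorem pos_of_lt_two (h : IsFocusingSolution v v') (h0 : 0 < v 0) (h2 : v 0 < 2) {a : ℝ}
    (ha : 0 ≤ a) : 0 < v a := by
  have hs2 := sq_sqrt (zero_le_two : (0:ℝ) ≤ 2)
  by_contra! hva
  obtain ⟨c, hc, hvc, hpos⟩ :=
    exists_eq_forall_lt_of_le ha (h.continuousOn.mono Icc_subset_Ici_self) h0.le hva
  have hv0 : √2 ≤ v 0 := by
    have hE := h.antitoneOn_energy self_mem_Ici hc.1 hc.1
    rw [h.energy_zero, energy, hvc] at hE
    have : 2 ≤ v 0 ^ 2 := by nlinarith [sq_nonneg (v' c), mul_pos h0 h0]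
    exact sqrt_le_iff.2 ⟨h0.le, this⟩
  obtain ⟨b, hb, hvb, habove⟩ := exists_eq_forall_lt_of_le hc.1
    (h.continuousOn.mono fun x hx => hx.1) hv0 (by rw [hvc]; exact sqrt_nonneg 2)
  have habove' : ∀ x ∈ Icc 0 b, √2 ≤ v x := fun x hx =>
    hx.2.eq_or_lt.elim (fun hxb => hxb ▸ hvb.ge) fun hxb => (habove x ⟨hx.1, hxb⟩).le
  have hdesc := h.two_thirds_le hb.1 hb.2 hvb hvc fun x hx => h.sq_le_two_of_first_zero hb.1
    habove' hvb (fun y hy => hpos y ⟨hb.1.trans hy.1, hy.2⟩) hvc hx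
  have hE := h.energy_le hb.1 habove' h2
  have hG := h.weightedEnergy_le hb.1 habove'
  have hC := quartic_sub_sq_le hv0 h2
  have hD := sub_one_sub_log_le (w := v 0 ^ 2 - 1) (by nlinarith [sqrt_nonneg 2]) (by nlinarith)
  have hs4 : √2 ^ 4 = 4 := by rw [show 4 = 2 * 2 from rfl, pow_mul, hs2]; norm_num
  rw [h.energy_zero, hvb, hs4, hs2] at hE
  rw [hvb, hs2] at hG
  norm_num at hG
  linarith [log_three_gt_d9]

end IsFocusingSolution

/-- Focusing equation with `μ = -1`: `v'' + v'/a - v + v³ = 0`. Then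
`|v(a)² - 1| ≤ |v(0)² - 1|` for all `a > 0`; in particular if `v(0) ∈ (0,2)` then
`v(a) > 0` for all `a ≥ 0`. -/
theorem stmt10 (v : ℝ → ℝ)
    (hv1 : ContDiffOn ℝ 1 v (Set.Ici 0))
    (hv2 : ContDiffOn ℝ 2 v (Set.Ioi 0))
    (hode : ∀ a > (0:ℝ), deriv (deriv v) a + deriv v a / a - v a + (v a) ^ 3 = 0)
    (hv'0 : derivWithin v (Set.Ici 0) 0 = 0) :
    (∀ a > (0:ℝ), |(v a) ^ 2 - 1| ≤ |(v 0) ^ 2 - 1|) ∧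
    (v 0 ∈ Set.Ioo (0:ℝ) 2 → ∀ a ≥ (0:ℝ), 0 < v a) := by
  have h := IsFocusingSolution.of_contDiffOn hv1 hv2 hode hv'0
  exact ⟨fun a ha => h.abs_sq_sub_one_le ha.le, fun hv0 a ha => h.pos_of_lt_two hv0.1 hv0.2 ha⟩
end

section
/- Bounded continuous hyperbolically radial standing waves of the hyperbolic cubic NLS exist only for μ < 0: if μ ≥ 0, any pair (v_f, v_d) of bounded C² solutions on (0,∞) of v_f'' + v_f'/a + μv_f + v_f³ = 0 and -v_d'' - v_d'/a + μv_d + v_d³ = 0, both continuous at 0 with vanishing derivative there and satisfying the matching condition v_f(0) = v_d(0), must have v_d ≡ 0 and hence (by matching) v_f(0) = 0. -/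
open Real Set Filter Topology

/-!
For a solution of the defocusing equation `v'' + v'/a = μ v + v³` the flux `P(a) = a v v'`
satisfies `P' = a (v'² + μ v² + v⁴) ≥ 0` when `μ ≥ 0`, and `P(0+) = 0` because `v'(0) = 0`,
so `P ≥ 0` on `(0, ∞)`. If `P` vanishes identically, so does `P'`, which forces `v = 0`.
Otherwise `P(t₀) = c > 0` for some `t₀`, and then `(v²)' = 2P/a ≥ 2c/a` on
`[t₀, ∞)`, so `v²` grows at least like `2c log a`, contradicting boundedness.
-/

def SolvesDefocusingRadial (μ : ℝ) (v : ℝ → ℝ) : Prop :=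
  ∀ a > (0:ℝ), -deriv (deriv v) a - deriv v a / a + μ * v a + v a ^ 3 = 0

noncomputable def radialFlux (v : ℝ → ℝ) (a : ℝ) : ℝ := a * (v a * deriv v a)

section Defocusing

variable {μ : ℝ} {v : ℝ → ℝ}

theorem hasDerivAt_radialFlux (h2 : ContDiffOn ℝ 2 v (Ioi 0))
    (hode : SolvesDefocusingRadial μ v)
    {a : ℝ} (ha : 0 < a) :
    HasDerivAt (radialFlux v) (a * (deriv v a ^ 2 + μ * v a ^ 2 + v a ^ 4)) a := by
  have hv : HasDerivAt v (deriv v a) a :=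
    ((h2.differentiableOn two_ne_zero).differentiableAt (Ioi_mem_nhds ha)).hasDerivAt
  have hv' : HasDerivAt (deriv v) (deriv (deriv v) a) a :=
    (((h2.deriv_of_isOpen isOpen_Ioi (by norm_num)).differentiableOn one_ne_zero).differentiableAt
      (Ioi_mem_nhds ha)).hasDerivAt
  have hv'' : deriv (deriv v) a = μ * v a + v a ^ 3 - deriv v a / a := by
    linarith [hode a ha]
  refine ((hasDerivAt_id a).mul (hv.mul hv')).congr_deriv ?_
  rw [hv'', id, Pi.mul_apply]
  field_simp
  ring

theorem monotoneOn_radialFlux (hμ : 0 ≤ μ) (h2 : ContDiffOn ℝ 2 v (Ioi 0))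
    (hode : SolvesDefocusingRadial μ v) :
    MonotoneOn (radialFlux v) (Ioi 0) := by
  have hderiv := fun a (ha : a ∈ Ioi (0:ℝ)) => hasDerivAt_radialFlux h2 hode ha
  refine monotoneOn_of_hasDerivWithinAt_nonneg (convex_Ioi 0)
    (fun a ha => (hderiv a ha).continuousAt.continuousWithinAt)
    (fun a ha => (hderiv a (interior_subset ha)).hasDerivWithinAt) fun a ha => ?_
  have ha : (0:ℝ) < a := interior_subset ha
  positivity

theorem tendsto_radialFlux_nhdsGT_zero (h1 : ContDiffOn ℝ 1 v (Ici 0))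
    (h'0 : derivWithin v (Ici 0) 0 = 0) :
    Tendsto (radialFlux v) (𝓝[>] 0) (𝓝 0) := by
  have hv : Tendsto v (𝓝[>] 0) (𝓝 (v 0)) :=
    (h1.continuousOn 0 self_mem_Ici).mono_left (nhdsWithin_mono _ Ioi_subset_Ici_self)
  have hv' : Tendsto (deriv v) (𝓝[>] 0) (𝓝 0) := by
    have h := ((h1.continuousOn_derivWithin (uniqueDiffOn_Ici 0) le_rfl) 0 self_mem_Ici).mono_left
      (nhdsWithin_mono _ Ioi_subset_Ici_self)
    rw [h'0] at h
    refine h.congr' ?_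
    filter_upwards [self_mem_nhdsWithin] with x hx
    exact derivWithin_of_mem_nhds (Ici_mem_nhds hx)
  show Tendsto (fun x => x * (v x * deriv v x)) _ _
  simpa using (tendsto_id.mono_left nhdsWithin_le_nhds).mul (hv.mul hv')

theorem MonotoneOn.nonneg_of_tendsto_nhdsGT_zero {f : ℝ → ℝ} (hf : MonotoneOn f (Ioi 0))
    (hlim : Tendsto f (𝓝[>] 0) (𝓝 0)) {a : ℝ} (ha : 0 < a) : 0 ≤ f a := by
  refine le_of_tendsto hlim ?_
  filter_upwards [Ioo_mem_nhdsGT ha] with x hx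
  exact hf hx.1 (mem_Ioi.mpr ha) hx.2.le

theorem eq_zero_of_radialFlux_eq_zero (hμ : 0 ≤ μ) (h2 : ContDiffOn ℝ 2 v (Ioi 0))
    (hode : SolvesDefocusingRadial μ v)
    (hP : ∀ a > (0:ℝ), radialFlux v a = 0) {a : ℝ} (ha : 0 < a) : v a = 0 := by
  have hconst : radialFlux v =ᶠ[𝓝 a] fun _ => 0 :=
    eventually_of_mem (Ioi_mem_nhds ha) hP
  have hD : a * (deriv v a ^ 2 + μ * v a ^ 2 + v a ^ 4) = 0 :=
    (hasDerivAt_radialFlux h2 hode ha).unique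
      ((hasDerivAt_const a 0).congr_of_eventuallyEq hconst)
  have hsum := (mul_eq_zero.mp hD).resolve_left ha.ne'
  have h4 : v a ^ 4 = 0 := by
    nlinarith [sq_nonneg (deriv v a), mul_nonneg hμ (sq_nonneg (v a)), pow_two_nonneg (v a ^ 2)]
  exact pow_eq_zero_iff four_ne_zero |>.mp h4

theorem tendsto_sq_atTop_of_radialFlux_pos (hv : DifferentiableOn ℝ v (Ioi 0))
    (hmono : MonotoneOn (radialFlux v) (Ioi 0)) {t₀ : ℝ} (ht₀ : 0 < t₀)
    (hc : 0 < radialFlux v t₀) : Tendsto (fun a => v a ^ 2) atTop atTop := by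
  set c := radialFlux v t₀
  set Q : ℝ → ℝ := fun a => v a ^ 2 - 2 * c * log a
  have hQ : ∀ a, 0 < a → HasDerivAt Q (2 * (v a * deriv v a) - 2 * c / a) a := by
    intro a ha
    have hva := (hv a ha).differentiableAt (Ioi_mem_nhds ha)
    refine ((hva.hasDerivAt.pow 2).sub ((hasDerivAt_log ha.ne').const_mul (2 * c))).congr_deriv ?_
    simp only [Nat.cast_ofNat, pow_one, Nat.add_one_sub_one]
    ring
  have hQmono : MonotoneOn Q (Ici t₀) := by
    refine monotoneOn_of_hasDerivWithinAt_nonneg (convex_Ici t₀)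
      (f' := fun a => 2 * (v a * deriv v a) - 2 * c / a)
      (fun a ha => (hQ a (ht₀.trans_le ha)).continuousAt.continuousWithinAt) ?_ ?_
    · rw [interior_Ici]
      exact fun a ha => (hQ a (ht₀.trans ha)).hasDerivWithinAt
    · rw [interior_Ici]
      intro a ha
      have ha0 : 0 < a := ht₀.trans ha
      have hflux : c ≤ a * (v a * deriv v a) := hmono (mem_Ioi.mpr ht₀) (mem_Ioi.mpr ha0) ha.le
      have : c / a ≤ v a * deriv v a := by rw [div_le_iff₀ ha0]; linarith
      rw [mul_div_assoc]
      linarith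
  have hlog : Tendsto (fun a => 2 * c * log a + Q t₀) atTop atTop :=
    tendsto_atTop_add_const_right _ _ (tendsto_log_atTop.const_mul_atTop (by positivity))
  refine tendsto_atTop_mono' _ ?_ hlog
  filter_upwards [eventually_ge_atTop t₀] with a ha
  have := hQmono (mem_Ici.mpr le_rfl) (mem_Ici.mpr ha) ha
  simp only [Q] at this
  linarith

theorem eq_zero_of_defocusing_radial (hμ : 0 ≤ μ) (h1 : ContDiffOn ℝ 1 v (Ici 0))
    (h2 : ContDiffOn ℝ 2 v (Ioi 0)) (hbdd : ∃ C : ℝ, ∀ a ≥ (0:ℝ), |v a| ≤ C)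
    (hode : SolvesDefocusingRadial μ v)
    (h'0 : derivWithin v (Ici 0) 0 = 0) :
    ∀ a ≥ (0:ℝ), v a = 0 := by
  have hmono := monotoneOn_radialFlux hμ h2 hode
  by_cases hP : ∀ a > (0:ℝ), radialFlux v a = 0
  · have hpos : ∀ a > (0:ℝ), v a = 0 := fun a ha =>
      eq_zero_of_radialFlux_eq_zero hμ h2 hode hP ha
    intro a ha
    rcases ha.eq_or_lt with rfl | ha
    · have hv : Tendsto v (𝓝[>] 0) (𝓝 (v 0)) :=
        (h1.continuousOn 0 self_mem_Ici).mono_left (nhdsWithin_mono _ Ioi_subset_Ici_self)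
      exact tendsto_nhds_unique hv <| tendsto_const_nhds.congr'
        (eventually_nhdsWithin_of_forall fun x hx => (hpos x hx).symm)
    · exact hpos a ha
  · push Not at hP
    obtain ⟨t₀, ht₀, hne⟩ := hP
    have hc : 0 < radialFlux v t₀ := (hmono.nonneg_of_tendsto_nhdsGT_zero
      (tendsto_radialFlux_nhdsGT_zero h1 h'0) ht₀).lt_of_ne' hne
    have hgrow :=
      tendsto_sq_atTop_of_radialFlux_pos (h2.differentiableOn two_ne_zero) hmono ht₀ hc
    obtain ⟨C, hC⟩ := hbdd
    obtain ⟨a, hlarge, ha⟩ :=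
      ((hgrow.eventually_gt_atTop (C ^ 2)).and (eventually_ge_atTop 0)).exists
    obtain ⟨hlo, hhi⟩ := abs_le.mp (hC a ha)
    nlinarith

end Defocusing

theorem stmt12_general (μ : ℝ) (hμ : 0 ≤ μ) (vf vd : ℝ → ℝ)
    (hd1 : ContDiffOn ℝ 1 vd (Set.Ici 0)) (hd2 : ContDiffOn ℝ 2 vd (Set.Ioi 0))
    (hbdd : ∃ C : ℝ, ∀ a ≥ (0:ℝ), |vf a| ≤ C ∧ |vd a| ≤ C)
    (hoded : ∀ a > (0:ℝ), -deriv (deriv vd) a - deriv vd a / a + μ * vd a + (vd a) ^ 3 = 0)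
    (hd'0 : derivWithin vd (Set.Ici 0) 0 = 0)
    (hmatch : vf 0 = vd 0) :
    (∀ a ≥ (0:ℝ), vd a = 0) ∧ vf 0 = 0 := by
  obtain ⟨C, hC⟩ := hbdd
  have hzero := eq_zero_of_defocusing_radial hμ hd1 hd2 ⟨C, fun a ha => (hC a ha).2⟩ hoded hd'0
  exact ⟨hzero, hmatch.trans (hzero 0 le_rfl)⟩

/-- Bounded continuous hyperbolically radial standing waves of the hyperbolic cubic NLS
exist only for `μ < 0`: if `μ ≥ 0` and `(v_f, v_d)` are bounded solutions of the focusing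
and defocusing radial equations with `v_f'(0) = v_d'(0) = 0` and matching `v_f(0) = v_d(0)`,
then `v_d ≡ 0` and `v_f(0) = 0`. -/
theorem stmt12 (μ : ℝ) (hμ : 0 ≤ μ) (vf vd : ℝ → ℝ)
    (hf1 : ContDiffOn ℝ 1 vf (Set.Ici 0)) (hf2 : ContDiffOn ℝ 2 vf (Set.Ioi 0))
    (hd1 : ContDiffOn ℝ 1 vd (Set.Ici 0)) (hd2 : ContDiffOn ℝ 2 vd (Set.Ioi 0))
    (hbdd : ∃ C : ℝ, ∀ a ≥ (0:ℝ), |vf a| ≤ C ∧ |vd a| ≤ C)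
    (hodef : ∀ a > (0:ℝ), deriv (deriv vf) a + deriv vf a / a + μ * vf a + (vf a) ^ 3 = 0)
    (hoded : ∀ a > (0:ℝ), -deriv (deriv vd) a - deriv vd a / a + μ * vd a + (vd a) ^ 3 = 0)
    (hf'0 : derivWithin vf (Set.Ici 0) 0 = 0)
    (hd'0 : derivWithin vd (Set.Ici 0) 0 = 0)
    (hmatch : vf 0 = vd 0) :
    (∀ a ≥ (0:ℝ), vd a = 0) ∧ vf 0 = 0 :=
  stmt12_general μ hμ vf vd hd1 hd2 hbdd hoded hd'0 hmatch
end
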